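/- Let I₀(z) = ∑_{n=0}^∞ (z/2)^{2n} / (n!)² denote the modified Bessel function of the first kind of order 0. Then for all real a, p with 0 < a < p, ∫_0^∞ e^{−px} · I₀(ax/2)² dx = (1/p) · ∑_{n=0}^∞ binom(2n, n)² · (a/(4p))^{2n}. -/

import Mathlib

open MeasureTheory Set

/-- The modified Bessel function of the first kind of order 0,
`I₀(z) = ∑ (z/2)^{2n}/(n!)²`. -/
noncomputable def besselI0 (z : ℝ) : ℝ :=
  ∑' n : ℕ, (z / 2) ^ (2 * n) / ((n.factorial : ℝ)) ^ 2

/-!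
The Cauchy product of the series of `I₀` with itself, together with Vandermonde's identity
`∑_{i+j=n} C(n,i) C(n,j) = C(2n,n)`, gives `I₀(z)² = ∑ C(2n,n) (z/2)^{2n} / (n!)²`.
Integrating term by term against `e^{-px}` with `∫₀^∞ x^k e^{-px} dx = k!/p^{k+1}` turns
`(2n)!/(n!)²` into a second factor `C(2n,n)`. The interchange of sum and integral is justified
by absolute convergence: `C(2n,n) ≤ 4^n`, so the resulting series is dominated by the geometric
series in `(a/p)²`.
-/

open scoped Nat
open Finset.HasAntidiagonal (antidiagonal mem_antidiagonal)

lemma summable_norm_besselI0_term (z : ℝ) :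
    Summable fun n : ℕ => ‖(z / 2) ^ (2 * n) / (n ! : ℝ) ^ 2‖ := by
  refine .of_nonneg_of_le (fun n => norm_nonneg _) (fun n => ?_)
    (Real.summable_pow_div_factorial ((z / 2) ^ 2))
  have hfact : (1 : ℝ) ≤ n ! := mod_cast n.factorial_pos
  rw [Real.norm_eq_abs, abs_div, abs_pow, pow_mul, sq_abs, abs_pow, Nat.abs_cast]
  gcongr
  exact le_self_pow₀ hfact two_ne_zero

lemma sum_antidiagonal_inv_factorial_sq (n : ℕ) :
    ∑ q ∈ antidiagonal n, 1 / ((q.1 ! : ℝ) ^ 2 * (q.2 ! : ℝ) ^ 2)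
      = (2 * n).choose n / (n ! : ℝ) ^ 2 := by
  rw [two_mul, Nat.add_choose_eq, Nat.cast_sum, Finset.sum_div]
  refine Finset.sum_congr rfl fun q hq => ?_
  obtain rfl : q.1 + q.2 = n := mem_antidiagonal.1 hq
  rw [Nat.cast_mul, Nat.cast_choose ℝ (Nat.le_add_right _ _),
    Nat.cast_choose ℝ (Nat.le_add_left _ _), Nat.add_sub_cancel_left, Nat.add_sub_cancel]
  field_simp

lemma besselI0_sq (z : ℝ) :
    besselI0 z ^ 2 = ∑' n : ℕ, ((2 * n).choose n : ℝ) * (z / 2) ^ (2 * n) / (n ! : ℝ) ^ 2 := by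
  have hs := summable_norm_besselI0_term z
  rw [besselI0, sq, tsum_mul_tsum_eq_tsum_sum_antidiagonal_of_summable_norm hs hs]
  refine tsum_congr fun n => ?_
  have hprod : ∀ q ∈ antidiagonal n,
      (z / 2) ^ (2 * q.1) / (q.1 ! : ℝ) ^ 2 * ((z / 2) ^ (2 * q.2) / (q.2 ! : ℝ) ^ 2)
        = (z / 2) ^ (2 * n) * (1 / ((q.1 ! : ℝ) ^ 2 * (q.2 ! : ℝ) ^ 2)) := by
    intro q hq
    rw [div_mul_div_comm, ← pow_add, ← mul_add, mem_antidiagonal.1 hq]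
    ring
  rw [Finset.sum_congr rfl hprod, ← Finset.mul_sum, sum_antidiagonal_inv_factorial_sq]
  ring

lemma choose_two_mul_mul_factorial_mul_factorial (n : ℕ) :
    (2 * n).choose n * n ! * n ! = (2 * n)! := by
  simpa [two_mul] using Nat.choose_mul_factorial_mul_factorial (Nat.le_add_left n n)

lemma integral_pow_mul_exp_neg_mul_Ioi {p : ℝ} (hp : 0 < p) (k : ℕ) :
    ∫ x in Ioi 0, x ^ k * Real.exp (-p * x) = k ! / p ^ (k + 1) := by
  have h := Real.integral_rpow_mul_exp_neg_mul_Ioi (a := k + 1) (by positivity) hp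
  rw [add_sub_cancel_right, Real.Gamma_nat_eq_factorial, one_div, Real.inv_rpow hp.le,
    ← Nat.cast_add_one, Real.rpow_natCast] at h
  simpa [Real.rpow_natCast, div_eq_inv_mul] using h

lemma integrableOn_pow_mul_exp_neg_mul_Ioi {p : ℝ} (hp : 0 < p) (k : ℕ) :
    IntegrableOn (fun x : ℝ => x ^ k * Real.exp (-p * x)) (Ioi 0) :=
  .of_integral_ne_zero <| by rw [integral_pow_mul_exp_neg_mul_Ioi hp]; positivity

theorem integral_exp_neg_mul_mul_tsum_pow {p : ℝ} (hp : 0 < p) (c : ℕ → ℝ) (e : ℕ → ℕ)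
    (hc : Summable fun n => |c n| * (e n)! / p ^ (e n + 1)) :
    ∫ x in Ioi 0, Real.exp (-p * x) * ∑' n, c n * x ^ e n
      = ∑' n, c n * (e n)! / p ^ (e n + 1) := by
  have hint n : IntegrableOn (fun x => c n * (x ^ e n * Real.exp (-p * x))) (Ioi 0) :=
    (integrableOn_pow_mul_exp_neg_mul_Ioi hp (e n)).const_mul (c n)
  have hval (b : ℝ) (k : ℕ) :
      ∫ x in Ioi 0, b * (x ^ k * Real.exp (-p * x)) = b * k ! / p ^ (k + 1) := by
    rw [integral_const_mul, integral_pow_mul_exp_neg_mul_Ioi hp, mul_div_assoc]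
  have hnorm n : ∫ x in Ioi 0, ‖c n * (x ^ e n * Real.exp (-p * x))‖
      = |c n| * (e n)! / p ^ (e n + 1) := by
    rw [← hval]
    refine setIntegral_congr_fun measurableSet_Ioi fun x hx => ?_
    rw [norm_mul, Real.norm_eq_abs, Real.norm_of_nonneg (by have := hx.out; positivity)]
  have hexpand (x : ℝ) : Real.exp (-p * x) * ∑' n, c n * x ^ e n
      = ∑' n, c n * (x ^ e n * Real.exp (-p * x)) := by
    rw [← tsum_mul_left]; congr with n; ring
  simp_rw [hexpand, ← hval]
  rw [integral_tsum_of_summable_integral_norm hint (by simpa only [hnorm] using hc)]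

lemma summable_choose_sq_mul_pow {r : ℝ} (hr : |r| < 1 / 4) :
    Summable fun n : ℕ => ((2 * n).choose n : ℝ) ^ 2 * r ^ (2 * n) := by
  have hratio : 16 * r ^ 2 < 1 := by
    rw [← sq_abs]; nlinarith [abs_nonneg r]
  refine .of_norm_bounded (summable_geometric_of_lt_one (by positivity) hratio) fun n => ?_
  have hcentral : ((2 * n).choose n : ℝ) ≤ 4 ^ n := mod_cast n.centralBinom_le_four_pow
  calc ‖((2 * n).choose n : ℝ) ^ 2 * r ^ (2 * n)‖
      = ((2 * n).choose n : ℝ) ^ 2 * (r ^ 2) ^ n := by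
        rw [norm_mul, norm_pow, Real.norm_natCast, norm_pow, Real.norm_eq_abs, pow_mul, sq_abs]
    _ ≤ ((4 : ℝ) ^ n) ^ 2 * (r ^ 2) ^ n := by gcongr
    _ = (16 * r ^ 2) ^ n := by rw [← pow_mul, mul_comm n, pow_mul, ← mul_pow]; norm_num

theorem laplace_besselI0_sq (a p : ℝ) (ha : 0 < a) (hap : a < p) :
    ∫ x : ℝ in Ioi 0, Real.exp (-p * x) * (besselI0 (a * x / 2)) ^ 2
      = (1 / p) * ∑' n : ℕ, ((Nat.choose (2 * n) n : ℝ)) ^ 2 * (a / (4 * p)) ^ (2 * n) := by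
  have hp : 0 < p := ha.trans hap
  set c : ℕ → ℝ := fun n => (2 * n).choose n / (n ! : ℝ) ^ 2 * (a / 4) ^ (2 * n) with hc
  have hexpand (x : ℝ) : besselI0 (a * x / 2) ^ 2 = ∑' n, c n * x ^ (2 * n) := by
    rw [besselI0_sq]
    congr with n
    rw [hc, show a * x / 2 / 2 = a / 4 * x by ring, mul_pow]
    ring
  have hterm n : c n * (2 * n)! / p ^ (2 * n + 1)
      = 1 / p * (((2 * n).choose n : ℝ) ^ 2 * (a / (4 * p)) ^ (2 * n)) := by
    rw [hc, ← choose_two_mul_mul_factorial_mul_factorial, Nat.cast_mul, Nat.cast_mul, div_mul_eq_div_div, div_pow (a / 4), pow_succ]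
    field_simp
  have hsum := summable_choose_sq_mul_pow (r := a / (4 * p)) (by
    rw [abs_of_pos (by positivity), div_lt_iff₀ (by positivity)]; linarith)
  simp_rw [hexpand]
  rw [integral_exp_neg_mul_mul_tsum_pow hp c (2 * ·), tsum_congr hterm, tsum_mul_left]
  have hc0 n : 0 ≤ c n := by positivity
  simpa only [abs_of_nonneg (hc0 _), hterm] using hsum.mul_left (1 / p)
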